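/- arXiv:1912.12711 — 6 statements merged into one kernel-verified Lean document; each statement's English description precedes it below -/
import Mathlib

section
/- For all real numbers α > −1 and β > 0 and every z ∈ ℂ, the classical Sonine formula holds: j_{α+β}(z) = (2 Γ(α+β+1) / (Γ(α+1) Γ(β))) · ∫₀¹ j_α(z·x) · x^{2α+1} · (1−x²)^{β−1} dx. -/
open MeasureTheory

/-- The normalized one-dimensional Bessel function
`j_μ(z) = Σ_{m=0}^∞ ((−1)^m Γ(μ+1))/(m! Γ(μ+m+1)) · (z/2)^{2m}`. -/
noncomputable def besselj (μ : ℝ) (z : ℂ) : ℂ :=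
  ∑' m : ℕ, ((-1 : ℂ) ^ m * (Real.Gamma (μ + 1) : ℂ)) /
      ((m.factorial : ℂ) * (Real.Gamma (μ + m + 1) : ℂ)) * (z / 2) ^ (2 * m)

/-!
Expanding `j_α` in its power series, the integral becomes a series of moments
`∫₀¹ x^{2m+2α+1} (1 - x²)^{β-1} dx`, which the substitution `u = x²` turns into the Beta
integrals `B(α+m+1, β) / 2 = Γ(α+m+1) Γ(β) / (2 Γ(α+β+m+1))`. The factor `Γ(α+m+1)` cancels
against the `m`-th coefficient of `j_α`, leaving a constant multiple of the `m`-th term of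
`j_{α+β}`.
Term-by-term integration is legitimate because the integrals of the absolute values of the terms
are the same constant multiple of the absolute values of the terms of `j_{α+β}`, whose series
converges absolutely.
-/

open Set Real

section Beta

lemma ofReal_rpow_mul_one_sub_rpow {a b x : ℝ} (hx : x ∈ Ioo (0 : ℝ) 1) :
    ((x ^ (a - 1) * (1 - x) ^ (b - 1) : ℝ) : ℂ) =
      (x : ℂ) ^ ((a : ℂ) - 1) * (1 - (x : ℂ)) ^ ((b : ℂ) - 1) := by
  rw [Complex.ofReal_mul, Complex.ofReal_cpow hx.1.le,
    Complex.ofReal_cpow (by linarith [hx.2])]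
  push_cast
  rfl

lemma integrableOn_rpow_mul_one_sub_rpow {a b : ℝ} (ha : 0 < a) (hb : 0 < b) :
    IntegrableOn (fun x : ℝ ↦ x ^ (a - 1) * (1 - x) ^ (b - 1)) (Ioo 0 1) := by
  have h := Complex.betaIntegral_convergent (u := a) (v := b) (by simpa) (by simpa)
  rw [intervalIntegrable_iff_integrableOn_Ioc_of_le zero_le_one] at h
  refine IntegrableOn.congr_fun (h.mono_set Ioo_subset_Ioc_self).re (fun x hx ↦ ?_)
    measurableSet_Ioo
  simp [← ofReal_rpow_mul_one_sub_rpow hx]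

lemma integral_rpow_mul_one_sub_rpow {a b : ℝ} (ha : 0 < a) (hb : 0 < b) :
    ∫ x in Ioo (0 : ℝ) 1, x ^ (a - 1) * (1 - x) ^ (b - 1) =
      Gamma a * Gamma b / Gamma (a + b) := by
  have h := Complex.betaIntegral_eq_Gamma_mul_div a b (by simpa) (by simpa)
  rw [Complex.betaIntegral, intervalIntegral.integral_of_le zero_le_one,
    integral_Ioc_eq_integral_Ioo, ← setIntegral_congr_fun measurableSet_Ioo
      fun x hx ↦ ofReal_rpow_mul_one_sub_rpow hx, integral_complex_ofReal, ← Complex.ofReal_add,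
    Complex.Gamma_ofReal, Complex.Gamma_ofReal, Complex.Gamma_ofReal] at h
  exact_mod_cast h

end Beta

section SquareSubstitution

variable {E : Type*} [NormedAddCommGroup E] [NormedSpace ℝ E]

lemma image_sq_Ioo_zero_one : (fun x : ℝ ↦ x ^ 2) '' Ioo 0 1 = Ioo 0 1 := by
  ext u
  constructor
  · rintro ⟨x, ⟨hx0, hx1⟩, rfl⟩
    exact ⟨by positivity, by nlinarith⟩
  · rintro ⟨hu0, hu1⟩
    exact ⟨√u, ⟨sqrt_pos.mpr hu0, (sqrt_lt' one_pos).mpr (by simpa)⟩, sq_sqrt hu0.le⟩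

lemma injOn_sq_Ioo_zero_one : InjOn (fun x : ℝ ↦ x ^ 2) (Ioo 0 1) :=
  fun _ hx _ hy h ↦ (pow_left_inj₀ hx.1.le hy.1.le two_ne_zero).mp h

lemma hasDerivWithinAt_sq (s : Set ℝ) (x : ℝ) :
    HasDerivWithinAt (fun x : ℝ ↦ x ^ 2) (2 * x) s x := by
  simpa using (hasDerivAt_pow 2 x).hasDerivWithinAt

lemma abs_two_mul_smul_eqOn (g : ℝ → E) :
    EqOn (fun x ↦ |2 * x| • g (x ^ 2)) (fun x ↦ (2 * x) • g (x ^ 2)) (Ioo 0 1) :=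
  fun x hx ↦ by simp only [abs_of_pos (by linarith [hx.1] : (0 : ℝ) < 2 * x)]

lemma integrableOn_Ioo_comp_sq_iff (g : ℝ → E) :
    IntegrableOn (fun x ↦ (2 * x) • g (x ^ 2)) (Ioo 0 1) ↔ IntegrableOn g (Ioo 0 1) := by
  rw [← integrableOn_congr_fun (abs_two_mul_smul_eqOn g) measurableSet_Ioo,
    ← integrableOn_image_iff_integrableOn_abs_deriv_smul measurableSet_Ioo
      (fun x _ ↦ hasDerivWithinAt_sq _ x) injOn_sq_Ioo_zero_one, image_sq_Ioo_zero_one]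

lemma integral_Ioo_comp_sq (g : ℝ → E) :
    ∫ x in Ioo (0 : ℝ) 1, (2 * x) • g (x ^ 2) = ∫ u in Ioo (0 : ℝ) 1, g u := by
  rw [← setIntegral_congr_fun measurableSet_Ioo (abs_two_mul_smul_eqOn g),
    ← integral_image_eq_integral_abs_deriv_smul measurableSet_Ioo
      (fun x _ ↦ hasDerivWithinAt_sq _ x) injOn_sq_Ioo_zero_one, image_sq_Ioo_zero_one]

end SquareSubstitution

section SquareBeta

lemma rpow_mul_one_sub_sq_rpow_eq {a b x : ℝ} (hx : 0 < x) :
    x ^ (2 * a - 1) * (1 - x ^ 2) ^ (b - 1) =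
      2⁻¹ * ((2 * x) • ((x ^ 2) ^ (a - 1) * (1 - x ^ 2) ^ (b - 1))) := by
  rw [← rpow_natCast x 2, ← rpow_mul hx.le, show 2 * a - 1 = (2 : ℕ) * (a - 1) + 1 by ring,
    rpow_add_one hx.ne', smul_eq_mul]
  ring

lemma integrableOn_rpow_mul_one_sub_sq_rpow {a b : ℝ} (ha : 0 < a) (hb : 0 < b) :
    IntegrableOn (fun x : ℝ ↦ x ^ (2 * a - 1) * (1 - x ^ 2) ^ (b - 1)) (Ioo 0 1) :=
  IntegrableOn.congr_fun
    (((integrableOn_Ioo_comp_sq_iff _).mpr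
      (integrableOn_rpow_mul_one_sub_rpow ha hb)).const_mul 2⁻¹)
    (fun _ hx ↦ (rpow_mul_one_sub_sq_rpow_eq hx.1).symm) measurableSet_Ioo

lemma integral_rpow_mul_one_sub_sq_rpow {a b : ℝ} (ha : 0 < a) (hb : 0 < b) :
    ∫ x in Ioo (0 : ℝ) 1, x ^ (2 * a - 1) * (1 - x ^ 2) ^ (b - 1) =
      Gamma a * Gamma b / (2 * Gamma (a + b)) := by
  rw [setIntegral_congr_fun measurableSet_Ioo fun _ hx ↦ rpow_mul_one_sub_sq_rpow_eq hx.1,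
    integral_const_mul,
    integral_Ioo_comp_sq fun u ↦ u ^ (a - 1) * (1 - u) ^ (b - 1),
    integral_rpow_mul_one_sub_rpow ha hb]
  ring

end SquareBeta

section BesselSeries

noncomputable def besseljTerm (μ : ℝ) (z : ℂ) (m : ℕ) : ℂ :=
  ((-1 : ℂ) ^ m * (Gamma (μ + 1) : ℂ)) / ((m.factorial : ℂ) * (Gamma (μ + m + 1) : ℂ)) *
    (z / 2) ^ (2 * m)

lemma besselj_eq_tsum (μ : ℝ) (z : ℂ) : besselj μ z = ∑' m, besseljTerm μ z m := rfl

lemma besseljTerm_mul_ofReal (μ : ℝ) (z : ℂ) (m : ℕ) (x : ℝ) :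
    besseljTerm μ (z * x) m = besseljTerm μ z m * ((x ^ (2 * m) : ℝ) : ℂ) := by
  simp only [besseljTerm]
  push_cast
  ring

lemma norm_besseljTerm {μ : ℝ} (hμ : -1 < μ) (z : ℂ) (m : ℕ) :
    ‖besseljTerm μ z m‖ =
      Gamma (μ + 1) / Gamma (μ + m + 1) * ((‖z / 2‖ ^ 2) ^ m / m.factorial) := by
  have h₁ : 0 < Gamma (μ + 1) := Gamma_pos_of_pos (by linarith)
  have h₂ : 0 < Gamma (μ + m + 1) := Gamma_pos_of_pos (by linarith [m.cast_nonneg (α := ℝ)])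
  simp only [besseljTerm, norm_mul, norm_div, norm_pow, norm_neg, norm_one, one_pow,
    Complex.norm_real, Complex.norm_natCast, norm_of_nonneg h₁.le, norm_of_nonneg h₂.le,
    ← pow_mul]
  ring

lemma Gamma_le_Gamma_add_one {y : ℝ} (hy : 1 ≤ y) : Gamma y ≤ Gamma (y + 1) := by
  rw [Gamma_add_one (by linarith)]
  exact le_mul_of_one_le_left (Gamma_pos_of_pos (by linarith)).le hy

lemma min_Gamma_le_Gamma_add_nat {x : ℝ} (hx : 0 < x) :
    ∀ m : ℕ, min (Gamma x) (Gamma (x + 1)) ≤ Gamma (x + m)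
  | 0 => by simp
  | m + 1 => by
    have hmono : Monotone fun n : ℕ ↦ Gamma (x + 1 + n) :=
      monotone_nat_of_le_succ fun n ↦ by
        simpa [add_assoc] using
          Gamma_le_Gamma_add_one (y := x + 1 + n) (by linarith [n.cast_nonneg (α := ℝ)])
    calc min (Gamma x) (Gamma (x + 1)) ≤ Gamma (x + 1 + 0) := by simp
      _ ≤ Gamma (x + 1 + m) := by simpa using hmono m.zero_le
      _ = Gamma (x + (m + 1 : ℕ)) := by push_cast; ring_nf

lemma summable_norm_besseljTerm {μ : ℝ} (hμ : -1 < μ) (z : ℂ) :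
    Summable fun m ↦ ‖besseljTerm μ z m‖ := by
  set δ := min (Gamma (μ + 1)) (Gamma (μ + 1 + 1))
  have hδ : 0 < δ := lt_min (Gamma_pos_of_pos (by linarith)) (Gamma_pos_of_pos (by linarith))
  refine Summable.of_nonneg_of_le (fun _ ↦ norm_nonneg _) (fun m ↦ ?_)
    ((summable_pow_div_factorial (‖z / 2‖ ^ 2)).mul_left (Gamma (μ + 1) / δ))
  rw [norm_besseljTerm hμ]
  gcongr ?_ * _
  refine div_le_div_of_nonneg_left (Gamma_pos_of_pos (by linarith)).le hδ ?_
  rw [add_right_comm]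
  exact min_Gamma_le_Gamma_add_nat (by linarith) m

lemma besseljTerm_mul_Gamma_div {α β : ℝ} (hα : -1 < α) (hαβ : -1 < α + β) (z : ℂ) (m : ℕ) :
    besseljTerm α z m * ((Gamma (α + m + 1) * Gamma β / (2 * Gamma (α + β + m + 1)) : ℝ) : ℂ) =
      ((Gamma (α + 1) * Gamma β / (2 * Gamma (α + β + 1)) : ℝ) : ℂ) *
        besseljTerm (α + β) z m := by
  have h₁ : (Gamma (α + m + 1) : ℂ) ≠ 0 :=
    Complex.ofReal_ne_zero.mpr (Gamma_pos_of_pos (by linarith [m.cast_nonneg (α := ℝ)])).ne'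
  have h₂ : (Gamma (α + β + 1) : ℂ) ≠ 0 :=
    Complex.ofReal_ne_zero.mpr (Gamma_pos_of_pos (by linarith)).ne'
  simp only [besseljTerm]
  push_cast
  field_simp

end BesselSeries

section SonineIntegral

variable {α β : ℝ}

noncomputable def sonineWeight (α β x : ℝ) : ℝ := x ^ (2 * α + 1) * (1 - x ^ 2) ^ (β - 1)

lemma sonineWeight_nonneg {x : ℝ} (hx : x ∈ Ioo (0 : ℝ) 1) : 0 ≤ sonineWeight α β x :=
  mul_nonneg (rpow_nonneg hx.1.le _) (rpow_nonneg (by nlinarith [hx.1, hx.2]) _)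

lemma pow_mul_sonineWeight_eq (m : ℕ) {x : ℝ} (hx : 0 < x) :
    x ^ (2 * m) * sonineWeight α β x = x ^ (2 * (α + m + 1) - 1) * (1 - x ^ 2) ^ (β - 1) := by
  rw [sonineWeight, ← mul_assoc, ← rpow_natCast, ← rpow_add hx]
  push_cast
  ring_nf

lemma integrableOn_pow_mul_sonineWeight (hα : -1 < α) (hβ : 0 < β) (m : ℕ) :
    IntegrableOn (fun x ↦ x ^ (2 * m) * sonineWeight α β x) (Ioo 0 1) :=
  IntegrableOn.congr_fun
    (integrableOn_rpow_mul_one_sub_sq_rpow (by linarith [m.cast_nonneg (α := ℝ)]) hβ)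
    (fun _ hx ↦ (pow_mul_sonineWeight_eq m hx.1).symm) measurableSet_Ioo

lemma integral_pow_mul_sonineWeight (hα : -1 < α) (hβ : 0 < β) (m : ℕ) :
    ∫ x in Ioo (0 : ℝ) 1, x ^ (2 * m) * sonineWeight α β x =
      Gamma (α + m + 1) * Gamma β / (2 * Gamma (α + β + m + 1)) := by
  rw [setIntegral_congr_fun measurableSet_Ioo fun _ hx ↦ pow_mul_sonineWeight_eq m hx.1,
    integral_rpow_mul_one_sub_sq_rpow (by linarith [m.cast_nonneg (α := ℝ)]) hβ]
  ring_nf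

lemma besseljTerm_mul_sonineWeight (z : ℂ) (m : ℕ) (x : ℝ) :
    besseljTerm α (z * x) m * (sonineWeight α β x : ℂ) =
      besseljTerm α z m * ((x ^ (2 * m) * sonineWeight α β x : ℝ) : ℂ) := by
  rw [besseljTerm_mul_ofReal, Complex.ofReal_mul, mul_assoc]

lemma integrableOn_besseljTerm_mul_sonineWeight (hα : -1 < α) (hβ : 0 < β) (z : ℂ) (m : ℕ) :
    IntegrableOn (fun x : ℝ ↦ besseljTerm α (z * x) m * (sonineWeight α β x : ℂ))
      (Ioo 0 1) := by
  simp_rw [besseljTerm_mul_sonineWeight]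
  exact (integrableOn_pow_mul_sonineWeight hα hβ m).ofReal.const_mul _

lemma integral_besseljTerm_mul_sonineWeight (hα : -1 < α) (hβ : 0 < β) (z : ℂ) (m : ℕ) :
    ∫ x in Ioo (0 : ℝ) 1, besseljTerm α (z * x) m * (sonineWeight α β x : ℂ) =
      ((Gamma (α + 1) * Gamma β / (2 * Gamma (α + β + 1)) : ℝ) : ℂ) *
        besseljTerm (α + β) z m := by
  simp_rw [besseljTerm_mul_sonineWeight]
  rw [integral_const_mul, integral_complex_ofReal, integral_pow_mul_sonineWeight hα hβ,
    besseljTerm_mul_Gamma_div hα (by linarith)]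

lemma integral_norm_besseljTerm_mul_sonineWeight (hα : -1 < α) (hβ : 0 < β) (z : ℂ)
    (m : ℕ) :
    ∫ x in Ioo (0 : ℝ) 1, ‖besseljTerm α (z * x) m * (sonineWeight α β x : ℂ)‖ =
      Gamma (α + 1) * Gamma β / (2 * Gamma (α + β + 1)) * ‖besseljTerm (α + β) z m‖ := by
  have hK : 0 ≤ Gamma (α + 1) * Gamma β / (2 * Gamma (α + β + 1)) := by
    have := Gamma_pos_of_pos (by linarith : 0 < α + 1)
    have := Gamma_pos_of_pos hβ
    have := Gamma_pos_of_pos (by linarith : 0 < α + β + 1)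
    positivity
  have hM : 0 ≤ Gamma (α + m + 1) * Gamma β / (2 * Gamma (α + β + m + 1)) :=
    integral_pow_mul_sonineWeight hα hβ m ▸ setIntegral_nonneg measurableSet_Ioo
      fun _ hx ↦ mul_nonneg (pow_nonneg hx.1.le _) (sonineWeight_nonneg hx)
  calc ∫ x in Ioo (0 : ℝ) 1, ‖besseljTerm α (z * x) m * (sonineWeight α β x : ℂ)‖
      = ∫ x in Ioo (0 : ℝ) 1, ‖besseljTerm α z m‖ * (x ^ (2 * m) * sonineWeight α β x) := by
        refine setIntegral_congr_fun measurableSet_Ioo fun x hx ↦ ?_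
        rw [besseljTerm_mul_sonineWeight, norm_mul, Complex.norm_real,
          norm_of_nonneg (mul_nonneg (pow_nonneg hx.1.le _) (sonineWeight_nonneg hx))]
    _ = ‖besseljTerm α z m *
          ((Gamma (α + m + 1) * Gamma β / (2 * Gamma (α + β + m + 1)) : ℝ) : ℂ)‖ := by
        rw [integral_const_mul, integral_pow_mul_sonineWeight hα hβ, norm_mul,
          Complex.norm_real, norm_of_nonneg hM]
    _ = Gamma (α + 1) * Gamma β / (2 * Gamma (α + β + 1)) * ‖besseljTerm (α + β) z m‖ := by
        rw [besseljTerm_mul_Gamma_div hα (by linarith), norm_mul, Complex.norm_real,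
          norm_of_nonneg hK]

lemma integral_besselj_mul_sonineWeight (hα : -1 < α) (hβ : 0 < β) (z : ℂ) :
    ∫ x in Ioo (0 : ℝ) 1, besselj α (z * x) * (sonineWeight α β x : ℂ) =
      ((Gamma (α + 1) * Gamma β / (2 * Gamma (α + β + 1)) : ℝ) : ℂ) * besselj (α + β) z := by
  simp_rw [besselj_eq_tsum, ← tsum_mul_right]
  rw [← integral_tsum_of_summable_integral_norm
    (fun m ↦ integrableOn_besseljTerm_mul_sonineWeight hα hβ z m)]
  · simp_rw [integral_besseljTerm_mul_sonineWeight hα hβ, tsum_mul_left]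
  · simp_rw [integral_norm_besseljTerm_mul_sonineWeight hα hβ]
    exact (summable_norm_besseljTerm (by linarith) z).mul_left _

end SonineIntegral

/-- The classical Sonine formula: for `α > -1`, `β > 0` and `z ∈ ℂ`,
`j_{α+β}(z) = (2 Γ(α+β+1) / (Γ(α+1) Γ(β))) · ∫₀¹ j_α(zx) x^{2α+1} (1−x²)^{β−1} dx`. -/
theorem sonine_formula (α β : ℝ) (hα : -1 < α) (hβ : 0 < β) (z : ℂ) :
    besselj (α + β) z =
      ((2 * Real.Gamma (α + β + 1) / (Real.Gamma (α + 1) * Real.Gamma β) : ℝ) : ℂ) *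
        ∫ x in (0:ℝ)..1, besselj α (z * (x : ℂ)) * ((x ^ (2 * α + 1) : ℝ) : ℂ) *
          (((1 - x ^ 2) ^ (β - 1) : ℝ) : ℂ) := by
  have hK : 2 * Gamma (α + β + 1) / (Gamma (α + 1) * Gamma β) *
      (Gamma (α + 1) * Gamma β / (2 * Gamma (α + β + 1))) = 1 := by
    have h₁ : Gamma (α + 1) ≠ 0 := (Gamma_pos_of_pos (by linarith)).ne'
    have h₂ : Gamma β ≠ 0 := (Gamma_pos_of_pos hβ).ne'
    have h₃ : Gamma (α + β + 1) ≠ 0 := (Gamma_pos_of_pos (by linarith)).ne'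
    field_simp
  simp_rw [mul_assoc, ← Complex.ofReal_mul, ← sonineWeight.eq_1 α β]
  rw [intervalIntegral.integral_of_le zero_le_one, integral_Ioc_eq_integral_Ioo,
    integral_besselj_mul_sonineWeight hα hβ, ← mul_assoc, ← Complex.ofReal_mul, hK,
    Complex.ofReal_one, one_mul]
end

section
/- Let n ≥ 1 be an integer, α > 0 and μ ∈ ℝ with μ ≥ (n−1)/α + 1/2. Then for every partition λ of length at most n, the generalized Pochhammer symbol satisfies [μ]^α_λ ≥ (1/2)^{|λ|}. -/
open Finset

/-- The generalized Pochhammer symbol `[μ]^α_λ = ∏_{j=1}^n (μ − (j−1)/α)_{λ_j}`,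
for a partition `λ` of length at most `n` (indexed by `Fin n`, so `(j:ℕ)` plays
the role of `j−1`). -/
noncomputable def genPochhammer (n : ℕ) (α μ : ℝ) (lam : Fin n → ℕ) : ℝ :=
  ∏ j : Fin n, (ascPochhammer ℝ (lam j)).eval (μ - (j : ℕ) / α)

/-! Every argument `μ - j/α` with `j ≤ n - 1` is at least `1/2`, and `(c)_l ≥ c^l` for `c ≥ 0`,
so each factor of `[μ]^α_λ` is at least `(1/2)^{λ_j}`. -/

theorem pow_le_ascPochhammer_eval {S : Type*} [Semiring S] [PartialOrder S] [IsOrderedRing S]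
    {s : S} (hs : 0 ≤ s) (n : ℕ) : s ^ n ≤ (ascPochhammer S n).eval s := by
  induction n with
  | zero => simp
  | succ n ih =>
    rw [pow_succ, ascPochhammer_succ_eval]
    exact mul_le_mul ih (le_add_of_nonneg_right n.cast_nonneg) hs ((pow_nonneg hs n).trans ih)

theorem genPochhammer_ge_general (n : ℕ) (α μ : ℝ) (hα : 0 < α)
    (hμ : ((n : ℝ) - 1) / α + 1 / 2 ≤ μ) (lam : Fin n → ℕ) :
    (1 / 2 : ℝ) ^ (∑ j, lam j) ≤ genPochhammer n α μ lam := by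
  rw [genPochhammer, ← prod_pow_eq_pow_sum]
  refine prod_le_prod (fun _ _ => by positivity) fun j _ => ?_
  have hj : ((j : ℕ) : ℝ) ≤ n - 1 := by
    rw [le_sub_iff_add_le]
    exact_mod_cast j.isLt
  have hhalf : 1 / 2 ≤ μ - (j : ℕ) / α := by
    have := div_le_div_of_nonneg_right hj hα.le
    linarith
  exact (pow_le_pow_left₀ (by norm_num) hhalf _).trans
    (pow_le_ascPochhammer_eval (by linarith) _)

/-- For `n ≥ 1`, `α > 0` and `μ ≥ (n−1)/α + 1/2`, every partition `λ` of length
at most `n` satisfies `[μ]^α_λ ≥ (1/2)^{|λ|}`. -/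
theorem genPochhammer_ge (n : ℕ) (hn : 1 ≤ n) (α μ : ℝ) (hα : 0 < α)
    (hμ : ((n : ℝ) - 1) / α + 1 / 2 ≤ μ) (lam : Fin n → ℕ) (hlam : Antitone lam) :
    (1 / 2 : ℝ) ^ (∑ j, lam j) ≤ genPochhammer n α μ lam :=
  genPochhammer_ge_general n α μ hα hμ lam
end

section
/- Let a ≥ −1/2, x ≥ 0 a real number and y ∈ ℝ. Then the normalized Laguerre polynomials converge to the normalized Bessel function: lim_{j→∞} L̃_{⌊jx⌋}^a(y²/j) = j_a(2y√x), where ⌊·⌋ denotes the floor function. -/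
open Finset Filter

/-- The normalized Laguerre polynomial
`L̃_m^a(t) = Σ_{l=0}^m (m choose l) · ((−1)^l/(a+1)_l) · t^l`. -/
noncomputable def lagTilde (a : ℝ) (m : ℕ) (t : ℝ) : ℝ :=
  ∑ l ∈ Finset.range (m + 1),
    (m.choose l : ℝ) * ((-1 : ℝ) ^ l / (ascPochhammer ℝ l).eval (a + 1)) * t ^ l

/-!
Writing `M = ⌊jx⌋₊`, the Laguerre polynomial is the series
`L̃_M^a(y²/j) = Σ_l (M choose l) / j^l · (-y²)^l / (a+1)_l`,
and `(M choose l) / j^l → x^l / l!` for each `l`, since `M / j → x`. The coefficients are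
dominated by `x^l / l!` uniformly in `j`, so Tannery's theorem lets the limit pass through
the sum, giving the power series `Σ_l x^l / l! · (-y²)^l / (a+1)_l`, which is `j_a(2y√x)`
because `Γ(a+1+l) = (a+1)_l Γ(a+1)`.
-/

open Topology
open scoped Nat

theorem min_le_ascPochhammer_eval {b : ℝ} (hb : 0 < b) :
    ∀ n : ℕ, min b 1 ≤ (ascPochhammer ℝ n).eval b
  | 0 => by simp
  | 1 => by simp
  | n + 2 => by
    have hpos := ascPochhammer_pos (n + 1) b hb
    have hfactor : (1 : ℝ) ≤ b + (n + 1 : ℕ) := by push_cast; linarith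
    rw [ascPochhammer_succ_eval]
    exact (min_le_ascPochhammer_eval hb (n + 1)).trans (le_mul_of_one_le_right hpos.le hfactor)

theorem Real.Gamma_add_nat_eq_ascPochhammer_mul {b : ℝ} (hb : 0 < b) :
    ∀ n : ℕ, Real.Gamma (b + n) = (ascPochhammer ℝ n).eval b * Real.Gamma b
  | 0 => by simp
  | n + 1 => by
    have hne : b + n ≠ 0 := by positivity
    rw [Nat.cast_succ, ← add_assoc, Real.Gamma_add_one hne,
      Real.Gamma_add_nat_eq_ascPochhammer_mul hb n, ascPochhammer_succ_eval]
    ring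

theorem summable_pow_div_factorial_mul_norm_div_ascPochhammer {b : ℝ} (hb : 0 < b) (x t : ℝ) :
    Summable fun l : ℕ => x ^ l / l ! * ‖t ^ l / (ascPochhammer ℝ l).eval b‖ := by
  refine Summable.of_norm_bounded
    ((Real.summable_pow_div_factorial (|x| * |t|)).mul_right (min b 1)⁻¹) fun l => ?_
  have hmin : 0 < min b 1 := lt_min hb one_pos
  have hP := min_le_ascPochhammer_eval hb l
  simp only [norm_mul, norm_div, norm_pow, Real.norm_of_nonneg (hmin.trans_le hP).le,
    Real.norm_eq_abs, abs_abs, Nat.abs_cast]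
  calc |x| ^ l / l ! * (|t| ^ l / (ascPochhammer ℝ l).eval b)
      = (|x| * |t|) ^ l / l ! * ((ascPochhammer ℝ l).eval b)⁻¹ := by ring
    _ ≤ (|x| * |t|) ^ l / l ! * (min b 1)⁻¹ := by gcongr

theorem lagTilde_div_eq_tsum (a : ℝ) (m : ℕ) (t s : ℝ) :
    lagTilde a m (t / s) =
      ∑' l : ℕ, (m.choose l : ℝ) / s ^ l * ((-t) ^ l / (ascPochhammer ℝ l).eval (a + 1)) := by
  rw [tsum_eq_sum (s := range (m + 1)) fun l hl => by
    simp [Nat.choose_eq_zero_of_lt (by simpa using hl)]]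
  refine sum_congr rfl fun l _ => ?_
  ring

theorem besselj_two_mul_mul_sqrt {a : ℝ} (ha : -1 < a) {x : ℝ} (hx : 0 ≤ x) (y : ℝ) :
    besselj a ((2 * y * √x : ℝ) : ℂ) =
      ((∑' l : ℕ, x ^ l / l ! * ((-y ^ 2) ^ l / (ascPochhammer ℝ l).eval (a + 1)) : ℝ) : ℂ) := by
  have ha1 : 0 < a + 1 := by linarith
  rw [besselj, Complex.ofReal_tsum]
  refine tsum_congr fun m => ?_
  have hΓ : Real.Gamma (a + m + 1) = (ascPochhammer ℝ m).eval (a + 1) * Real.Gamma (a + 1) := by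
    rw [add_right_comm]; exact Real.Gamma_add_nat_eq_ascPochhammer_mul ha1 m
  have hpow : (2 * y * √x / 2) ^ (2 * m) = (x * y ^ 2) ^ m := by
    rw [pow_mul, mul_assoc, mul_div_cancel_left₀ _ two_ne_zero, mul_pow, Real.sq_sqrt hx, mul_comm]
  have hterm : (-1) ^ m * Real.Gamma (a + 1) / (m ! * Real.Gamma (a + m + 1)) *
      (2 * y * √x / 2) ^ (2 * m) = x ^ m / m ! * ((-y ^ 2) ^ m / (ascPochhammer ℝ m).eval (a + 1)) := by
    have := (ascPochhammer_pos m _ ha1).ne'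
    have := (Real.Gamma_pos_of_pos ha1).ne'
    rw [hΓ, hpow]
    field_simp
    ring
  exact_mod_cast hterm

theorem tendsto_choose_div_pow {M : ℕ → ℕ} {x : ℝ}
    (hM : Tendsto (fun j : ℕ => (M j : ℝ) / j) atTop (𝓝 x)) (l : ℕ) :
    Tendsto (fun j : ℕ => ((M j).choose l : ℝ) / (j : ℝ) ^ l) atTop (𝓝 (x ^ l / l !)) := by
  have hfactor (i : ℕ) : Tendsto (fun j : ℕ => (M j : ℝ) / j - i / j) atTop (𝓝 x) := by
    simpa using hM.sub (tendsto_const_div_atTop_nhds_zero_nat (i : ℝ))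
  have hprod := (tendsto_finsetProd (range l) fun i _ => hfactor i).div_const (l ! : ℝ)
  rw [prod_const, card_range] at hprod
  refine hprod.congr fun j => ?_
  simp_rw [← sub_div]
  rw [Nat.cast_choose_eq_descPochhammer_div, descPochhammer_eval_eq_prod_range, prod_div_distrib,
    prod_const, card_range, div_right_comm]

theorem choose_div_pow_le {n : ℕ} {s x : ℝ} (hs : 0 ≤ s) (hn : n / s ≤ x) (l : ℕ) :
    (n.choose l : ℝ) / s ^ l ≤ x ^ l / l ! :=
  calc (n.choose l : ℝ) / s ^ l ≤ (n ^ l / l !) / s ^ l := by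
        gcongr; exact Nat.choose_le_pow_div l n
    _ = (n / s) ^ l / l ! := by rw [div_pow, div_right_comm]
    _ ≤ x ^ l / l ! := by gcongr

theorem tendsto_tsum_choose_div_pow_mul {M : ℕ → ℕ} {x : ℝ} (hM_le : ∀ j : ℕ, (M j : ℝ) / j ≤ x)
    (hM : Tendsto (fun j : ℕ => (M j : ℝ) / j) atTop (𝓝 x)) {c : ℕ → ℝ}
    (hc : Summable fun l : ℕ => x ^ l / l ! * ‖c l‖) :
    Tendsto (fun j : ℕ => ∑' l : ℕ, ((M j).choose l : ℝ) / (j : ℝ) ^ l * c l) atTop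
      (𝓝 (∑' l : ℕ, x ^ l / l ! * c l)) :=
  tendsto_tsum_of_dominated_convergence hc (fun l => (tendsto_choose_div_pow hM l).mul_const _)
    (Eventually.of_forall fun j l => by
      rw [norm_mul, Real.norm_of_nonneg (by positivity)]
      exact mul_le_mul_of_nonneg_right (choose_div_pow_le j.cast_nonneg (hM_le j) l)
        (norm_nonneg _))

/-- For `a ≥ −1/2`, `x ≥ 0` and `y ∈ ℝ`, the normalized Laguerre polynomials converge
to the normalized Bessel function: `lim_{j→∞} L̃_{⌊jx⌋}^a(y²/j) = j_a(2y√x)`. -/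
theorem laguerre_tendsto_bessel (a : ℝ) (ha : -(1 / 2 : ℝ) ≤ a) (x : ℝ) (hx : 0 ≤ x) (y : ℝ) :
    Tendsto (fun j : ℕ => ((lagTilde a ⌊(j : ℝ) * x⌋₊ (y ^ 2 / (j : ℝ)) : ℝ) : ℂ))
      atTop (nhds (besselj a ((2 * y * Real.sqrt x : ℝ) : ℂ))) := by
  have hfloor : Tendsto (fun j : ℕ => (⌊(j : ℝ) * x⌋₊ : ℝ) / j) atTop (𝓝 x) := by
    simpa only [mul_comm x, Function.comp_def] using
      (tendsto_nat_floor_mul_div_atTop hx).comp tendsto_natCast_atTop_atTop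
  have hfloor_le (j : ℕ) : (⌊(j : ℝ) * x⌋₊ : ℝ) / j ≤ x :=
    div_le_of_le_mul₀ j.cast_nonneg hx ((Nat.floor_le (by positivity)).trans_eq (mul_comm _ _))
  have hsum := summable_pow_div_factorial_mul_norm_div_ascPochhammer
    (by linarith : (0 : ℝ) < a + 1) x (-y ^ 2)
  simp_rw [lagTilde_div_eq_tsum]
  rw [besselj_two_mul_mul_sqrt (by linarith) hx]
  exact (Complex.continuous_ofReal.tendsto _).comp
    (tendsto_tsum_choose_div_pow_mul hfloor_le hfloor hsum)
end

section
/- Let a > −1, h > 0 and m ∈ ℕ. For 0 ≤ l ≤ m define the connection coefficients c_{m,l} := (m!/(a+h+1)_m) · ((h)_{m−l}/(m−l)!) · ((a+1)_l/l!). Then c_{m,l} ≥ 0 for all 0 ≤ l ≤ m, Σ_{l=0}^m c_{m,l} = 1, and for every x ∈ ℝ the Laguerre connection formula L̃_m^{a+h}(x) = Σ_{l=0}^m c_{m,l} · L̃_l^a(x) holds. In particular, the normalized Laguerre polynomial with shifted parameter a+h is a convex combination of the normalized Laguerre polynomials with parameter a. -/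
open Finset

/-- The Laguerre connection coefficients
`c_{m,l} = (m!/(a+h+1)_m) · ((h)_{m−l}/(m−l)!) · ((a+1)_l/l!)`. -/
noncomputable def lagConnCoeff (a h : ℝ) (m l : ℕ) : ℝ :=
  ((m.factorial : ℝ) / (ascPochhammer ℝ m).eval (a + h + 1)) *
    ((ascPochhammer ℝ (m - l)).eval h / ((m - l).factorial : ℝ)) *
    ((ascPochhammer ℝ l).eval (a + 1) / (l.factorial : ℝ))

/-!
Comparing coefficients of `t ^ j`, the connection formula reduces to
`∑ₖ c_{m,k} (k choose j) = (m choose j) (a+1)_j / (a+h+1)_j`. Since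
`(m choose k)(k choose j) = (m choose j)(m-j choose k-j)` and `(a+1)_k = (a+1)_j (a+1+j)_{k-j}`,
this is the Chu–Vandermonde identity `(x+y)_n = ∑ᵢ (n choose i) (x)_{n-i} (y)_i` for rising
factorials, applied with `n = m - j`, `x = h`, `y = a+1+j`. Its case `j = 0` says that the
coefficients sum to `1`; their nonnegativity is that of rising factorials at positive arguments.
-/

section Pochhammer

variable {R : Type*} [CommSemiring R]

theorem ascPochhammer_eval_add_index (x : R) (n k : ℕ) :
    (ascPochhammer R (n + k)).eval x =
      (ascPochhammer R n).eval x * (ascPochhammer R k).eval (x + n) := by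
  rw [← ascPochhammer_mul, Polynomial.eval_mul, Polynomial.eval_comp]
  simp

theorem ascPochhammer_eval_add (x y : R) (n : ℕ) :
    (ascPochhammer R n).eval (x + y) = ∑ ij ∈ antidiagonal n,
      (n.choose ij.1 : R) * ((ascPochhammer R ij.1).eval x * (ascPochhammer R ij.2).eval y) := by
  induction n with
  | zero => simp
  | succ n ih =>
    rw [ascPochhammer_succ_eval, ih, sum_mul, sum_antidiagonal_choose_succ_mul
      (fun i j => (ascPochhammer R i).eval x * (ascPochhammer R j).eval y), ← sum_add_distrib]
    refine sum_congr rfl fun ij hij => ?_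
    rw [HasAntidiagonal.mem_antidiagonal] at hij
    rw [Nat.choose_symm_of_eq_add hij.symm, ascPochhammer_succ_eval, ascPochhammer_succ_eval,
      ← hij]
    push_cast
    ring

theorem sum_choose_mul_choose_mul_ascPochhammer_eval (x y : R) {m j : ℕ} (hj : j ≤ m) :
    ∑ k ∈ range (m + 1), (m.choose k : R) * (k.choose j : R) *
        ((ascPochhammer R (m - k)).eval x * (ascPochhammer R k).eval y) =
      (m.choose j : R) * (ascPochhammer R j).eval y *
        (ascPochhammer R (m - j)).eval (x + (y + j)) := by
  obtain ⟨n, rfl⟩ := Nat.exists_eq_add_of_le hj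
  rw [show j + n + 1 = j + (n + 1) by ring, sum_range_add,
    sum_eq_zero fun k hk => by simp [Nat.choose_eq_zero_of_lt (mem_range.1 hk)], zero_add,
    Nat.add_sub_cancel_left, add_comm x, ascPochhammer_eval_add,
    Nat.sum_antidiagonal_eq_sum_range_succ
      (fun i k => (n.choose i : R) * ((ascPochhammer R i).eval (y + j) *
        (ascPochhammer R k).eval x)), mul_sum]
  refine sum_congr rfl fun i _ => ?_
  have hchoose := Nat.choose_mul (n := j + n) (k := j + i) (Nat.le_add_right j i)
  rw [Nat.add_sub_cancel_left, Nat.add_sub_cancel_left] at hchoose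
  rw [Nat.add_sub_add_left, ascPochhammer_eval_add_index, ← Nat.cast_mul, hchoose]
  push_cast
  ring

end Pochhammer

theorem lagTilde_eq_sum_range_of_le (a t : ℝ) {k n : ℕ} (hkn : k ≤ n) :
    lagTilde a k t = ∑ j ∈ range (n + 1),
      (k.choose j : ℝ) * ((-1 : ℝ) ^ j / (ascPochhammer ℝ j).eval (a + 1)) * t ^ j := by
  refine sum_subset (range_subset_range.2 (by omega)) fun j _ hj => ?_
  simp [Nat.choose_eq_zero_of_lt (by simpa using hj : k < j)]

theorem lagConnCoeff_eq (a h : ℝ) {m l : ℕ} (hl : l ≤ m) :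
    lagConnCoeff a h m l = (m.choose l : ℝ) *
      ((ascPochhammer ℝ (m - l)).eval h * (ascPochhammer ℝ l).eval (a + 1)) /
        (ascPochhammer ℝ m).eval (a + h + 1) := by
  rw [lagConnCoeff, Nat.cast_choose ℝ hl]
  field_simp

theorem lagConnCoeff_nonneg {a h : ℝ} (ha : -1 < a) (hh : 0 < h) (m l : ℕ) :
    0 ≤ lagConnCoeff a h m l := by
  have := ascPochhammer_pos (m - l) h hh
  have := ascPochhammer_pos l (a + 1) (by linarith)
  have := ascPochhammer_pos m (a + h + 1) (by linarith)
  unfold lagConnCoeff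
  positivity

theorem sum_lagConnCoeff_mul_choose (a h : ℝ) {m j : ℕ} (hj : j ≤ m)
    (hP : (ascPochhammer ℝ m).eval (a + h + 1) ≠ 0) :
    ∑ k ∈ range (m + 1), lagConnCoeff a h m k * (k.choose j : ℝ) =
      (m.choose j : ℝ) * (ascPochhammer ℝ j).eval (a + 1) /
        (ascPochhammer ℝ j).eval (a + h + 1) := by
  have hsplit : (ascPochhammer ℝ m).eval (a + h + 1) =
      (ascPochhammer ℝ j).eval (a + h + 1) * (ascPochhammer ℝ (m - j)).eval (a + h + 1 + j) := by
    simpa [Nat.add_sub_cancel' hj] using ascPochhammer_eval_add_index (a + h + 1) j (m - j)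
  rw [hsplit] at hP
  calc ∑ k ∈ range (m + 1), lagConnCoeff a h m k * (k.choose j : ℝ)
      = (∑ k ∈ range (m + 1), (m.choose k : ℝ) * (k.choose j : ℝ) *
          ((ascPochhammer ℝ (m - k)).eval h * (ascPochhammer ℝ k).eval (a + 1))) /
            (ascPochhammer ℝ m).eval (a + h + 1) := by
        rw [sum_div]
        refine sum_congr rfl fun k hk => ?_
        rw [lagConnCoeff_eq a h (Nat.lt_succ_iff.1 (mem_range.1 hk))]
        ring
    _ = (m.choose j : ℝ) * (ascPochhammer ℝ j).eval (a + 1) /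
          (ascPochhammer ℝ j).eval (a + h + 1) := by
        rw [sum_choose_mul_choose_mul_ascPochhammer_eval _ _ hj, hsplit,
          show h + (a + 1 + j) = a + h + 1 + j by ring]
        field_simp [left_ne_zero_of_mul hP, right_ne_zero_of_mul hP]

theorem lagTilde_add_eq_sum_lagConnCoeff_mul {a : ℝ} (h x : ℝ) {m : ℕ} (ha : -1 < a)
    (hP : (ascPochhammer ℝ m).eval (a + h + 1) ≠ 0) :
    lagTilde (a + h) m x = ∑ l ∈ range (m + 1), lagConnCoeff a h m l * lagTilde a l x := by
  symm
  calc ∑ l ∈ range (m + 1), lagConnCoeff a h m l * lagTilde a l x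
      = ∑ l ∈ range (m + 1), ∑ j ∈ range (m + 1), lagConnCoeff a h m l *
          ((l.choose j : ℝ) * ((-1 : ℝ) ^ j / (ascPochhammer ℝ j).eval (a + 1)) * x ^ j) := by
        refine sum_congr rfl fun l hl => ?_
        rw [lagTilde_eq_sum_range_of_le a x (Nat.lt_succ_iff.1 (mem_range.1 hl)), mul_sum]
    _ = ∑ j ∈ range (m + 1), (∑ l ∈ range (m + 1), lagConnCoeff a h m l * (l.choose j : ℝ)) *
          ((-1 : ℝ) ^ j / (ascPochhammer ℝ j).eval (a + 1) * x ^ j) := by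
        rw [sum_comm]
        refine sum_congr rfl fun j _ => ?_
        rw [sum_mul]
        refine sum_congr rfl fun l _ => ?_
        ring
    _ = lagTilde (a + h) m x := by
        refine sum_congr rfl fun j hj => ?_
        have := (ascPochhammer_pos j (a + 1) (by linarith)).ne'
        rw [sum_lagConnCoeff_mul_choose a h (Nat.lt_succ_iff.1 (mem_range.1 hj)) hP,
          show a + h + 1 = a + (h + 1) by ring]
        field_simp

/-- For `a > −1`, `h > 0` and `m ∈ ℕ`, the connection coefficients `c_{m,l}` are
nonnegative, sum to `1`, and `L̃_m^{a+h} = Σ_{l=0}^m c_{m,l} L̃_l^a`; in particular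
`L̃_m^{a+h}` is a convex combination of the `L̃_l^a`. -/
theorem laguerre_connection (a h : ℝ) (ha : -1 < a) (hh : 0 < h) (m : ℕ) :
    (∀ l ≤ m, 0 ≤ lagConnCoeff a h m l) ∧
      (∑ l ∈ Finset.range (m + 1), lagConnCoeff a h m l = 1) ∧
      ∀ x : ℝ, lagTilde (a + h) m x =
        ∑ l ∈ Finset.range (m + 1), lagConnCoeff a h m l * lagTilde a l x := by
  have hP : (ascPochhammer ℝ m).eval (a + h + 1) ≠ 0 :=
    (ascPochhammer_pos m _ (by linarith)).ne'
  refine ⟨fun l _ => lagConnCoeff_nonneg ha hh m l, ?_,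
    fun x => lagTilde_add_eq_sum_lagConnCoeff_mul h x ha hP⟩
  simpa using sum_lagConnCoeff_mul_choose a h (Nat.zero_le m) hP
end

section
/- For every z ∈ ℂ, lim_{μ→+∞} j_μ(2√μ · z) = exp(−z²), where the limit is taken along real μ tending to +∞. -/
open Filter

/-!
Writing `Γ(μ + m + 1) = Γ(μ + 1) (μ + 1) ⋯ (μ + m)`, the `m`-th term of `j_μ(2√μ z)` is
`(-z²)^m / m!` times the factor `∏_{k < m} μ / (μ + k + 1)`, which lies in `[0, 1]` and tends
to `1` as `μ → ∞`. Tannery's theorem, with the exponential series as dominating series, lets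
the limit pass through the sum.
-/

open Finset Topology

theorem tendsto_tsum_smul_of_tendsto_one {α β E : Type*} [NormedAddCommGroup E]
    [NormedSpace ℝ E] [CompleteSpace E] {l : Filter α} {c : β → E} (hc : Summable (‖c ·‖))
    {p : α → β → ℝ} (hp : ∀ k, Tendsto (p · k) l (𝓝 1)) (hp_le : ∀ᶠ a in l, ∀ k, |p a k| ≤ 1) :
    Tendsto (fun a => ∑' k, p a k • c k) l (𝓝 (∑' k, c k)) :=
  tendsto_tsum_of_dominated_convergence hc (fun k => by simpa using (hp k).smul_const (c k))
    (hp_le.mono fun a h k => by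
      rw [norm_smul, Real.norm_eq_abs]
      exact mul_le_of_le_one_left (norm_nonneg _) (h k))

theorem Real.Gamma_add_nat_add_one_eq_mul_prod {μ : ℝ} (hμ : -1 < μ) (m : ℕ) :
    Gamma (μ + m + 1) = Gamma (μ + 1) * ∏ k ∈ range m, (μ + k + 1) := by
  induction m with
  | zero => simp
  | succ n ih =>
    have hshift : μ + (n + 1 : ℕ) + 1 = (μ + n + 1) + 1 := by push_cast; ring
    have hpos : 0 < μ + n + 1 := by linarith [n.cast_nonneg (α := ℝ)]
    rw [hshift, Gamma_add_one hpos.ne', ih, prod_range_succ]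
    ring

theorem abs_prod_div_add_nat_add_one_le_one {μ : ℝ} (hμ : 0 ≤ μ) (m : ℕ) :
    |∏ k ∈ range m, μ / (μ + k + 1)| ≤ 1 := by
  rw [abs_prod]
  refine prod_le_one (fun k _ => abs_nonneg _) fun k _ => ?_
  rw [abs_of_nonneg (by positivity), div_le_one (by positivity)]
  linarith [k.cast_nonneg (α := ℝ)]

theorem tendsto_div_add_atTop (c : ℝ) : Tendsto (fun μ : ℝ => μ / (μ + c)) atTop (𝓝 1) := by
  have h : Tendsto (fun μ : ℝ => 1 - c / (μ + c)) atTop (𝓝 (1 - 0)) :=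
    tendsto_const_nhds.sub <| tendsto_const_nhds.div_atTop <|
      tendsto_atTop_add_const_right atTop c tendsto_id
  rw [sub_zero] at h
  refine h.congr' ?_
  filter_upwards [eventually_gt_atTop (-c)] with μ hμ
  field_simp [show μ + c ≠ 0 by linarith]
  ring

theorem tendsto_prod_div_add_nat_add_one (m : ℕ) :
    Tendsto (fun μ : ℝ => ∏ k ∈ range m, μ / (μ + k + 1)) atTop (𝓝 1) := by
  simpa only [prod_const_one, add_assoc] using
    tendsto_finsetProd (range m) fun k _ => tendsto_div_add_atTop ((k : ℝ) + 1)

theorem besselj_term_two_sqrt_mul {μ : ℝ} (hμ : 0 ≤ μ) (z : ℂ) (m : ℕ) :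
    ((-1 : ℂ) ^ m * (Real.Gamma (μ + 1) : ℂ)) /
      ((m.factorial : ℂ) * (Real.Gamma (μ + m + 1) : ℂ)) *
      (2 * (Real.sqrt μ : ℂ) * z / 2) ^ (2 * m) =
      (∏ k ∈ range m, μ / (μ + k + 1)) • ((-z ^ 2) ^ m / m.factorial) := by
  have hΓ : (Real.Gamma (μ + 1) : ℂ) ≠ 0 := by
    exact_mod_cast (Real.Gamma_pos_of_pos (by linarith)).ne'
  have hprod : ∏ k ∈ range m, ((μ : ℂ) + k + 1) ≠ 0 :=
    prod_ne_zero_iff.mpr fun k _ => by exact_mod_cast (by positivity : (0 : ℝ) < μ + k + 1).ne'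
  have hsqrt : (Real.sqrt μ : ℂ) ^ 2 = μ := by exact_mod_cast Real.sq_sqrt hμ
  rw [Real.Gamma_add_nat_add_one_eq_mul_prod (by linarith), Complex.real_smul]
  push_cast
  rw [mul_assoc, mul_div_cancel_left₀ _ two_ne_zero, mul_pow, pow_mul, pow_mul, hsqrt,
    prod_div_distrib, prod_const, card_range, neg_pow (z ^ 2)]
  field_simp

/-- For every `z ∈ ℂ`, `lim_{μ→+∞} j_μ(2√μ · z) = exp(−z²)`, the limit being taken
along real `μ → +∞`. -/
theorem bessel_tendsto_gaussian (z : ℂ) :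
    Tendsto (fun μ : ℝ => besselj μ (2 * (Real.sqrt μ : ℂ) * z)) atTop
      (nhds (Complex.exp (-z ^ 2))) := by
  rw [Complex.exp_eq_exp_ℂ, NormedSpace.exp_eq_tsum_div]
  refine (tendsto_tsum_smul_of_tendsto_one (NormedSpace.norm_expSeries_div_summable (-z ^ 2))
    tendsto_prod_div_add_nat_add_one ?_).congr' ?_
  · filter_upwards [eventually_ge_atTop 0] with μ hμ
    exact abs_prod_div_add_nat_add_one_le_one hμ
  · filter_upwards [eventually_ge_atTop 0] with μ hμ
    simp only [besselj, besselj_term_two_sqrt_mul hμ]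
end

section
/- Let a > −1. Then for every t ∈ ℝ, the function ξ ↦ j_a(2t√ξ) ξ^a e^{−ξ} is integrable on (0,∞) and ∫₀^∞ j_a(2t√ξ) · ξ^a · e^{−ξ} dξ = Γ(a+1) · e^{−t²}. In other words, the Gaussian e^{−t²} is the integral of the normalized Bessel functions ξ ↦ j_a(2t√ξ) against the Gamma probability distribution Γ(a+1)^{−1} ξ^a e^{−ξ} dξ on (0,∞). -/
/-!
Expanding `j_a(2t√ξ) = Σ_m Γ(a+1) (-t²)^m ξ^m / (m! Γ(a+m+1))` and integrating term by term
against `ξ^a e^{-ξ}`, the `m`-th moment `Γ(a+m+1)` cancels the denominator, leaving the exponential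
series `Γ(a+1) Σ_m (-t²)^m / m!`. The interchange is justified because the same computation with
absolute values gives the convergent series `Γ(a+1) Σ_m t^{2m} / m!`.
-/

open MeasureTheory

open Filter Real Set

namespace MeasureTheory

variable {α E : Type*} [MeasurableSpace α] {μ : Measure α} [NormedAddCommGroup E]
  [CompleteSpace E]

theorem integrable_tsum_of_summable_integral_norm {ι : Type*} [Countable ι] {F : ι → α → E}
    (hF_int : ∀ i, Integrable (F i) μ) (hF_sum : Summable fun i ↦ ∫ a, ‖F i a‖ ∂μ) :
    Integrable (fun a ↦ ∑' i, F i a) μ := by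
  have h_lintegral : ∑' i, ∫⁻ a, ‖F i a‖ₑ ∂μ ≠ ⊤ := by
    simp_rw [← ofReal_integral_norm_eq_lintegral_enorm (hF_int _)]
    rw [← ENNReal.ofReal_tsum_of_nonneg (fun i ↦ integral_nonneg fun a ↦ norm_nonneg _) hF_sum]
    exact ENNReal.ofReal_ne_top
  have h_summable : ∀ᵐ a ∂μ, Summable fun i ↦ ‖F i a‖ :=
    summable_norm_of_tsum_eLpNorm_ne_top le_rfl (fun i ↦ (hF_int i).1)
      (by simpa only [eLpNorm_one_eq_lintegral_enorm] using h_lintegral)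
  refine ⟨aestronglyMeasurable_of_tendsto_ae atTop
    (fun s ↦ Finset.aestronglyMeasurable_fun_sum s fun i _ ↦ (hF_int i).1)
    (h_summable.mono fun a ha ↦ ha.of_norm.hasSum), ?_⟩
  calc ∫⁻ a, ‖∑' i, F i a‖ₑ ∂μ ≤ ∫⁻ a, ∑' i, ‖F i a‖ₑ ∂μ :=
        lintegral_mono fun a ↦ enorm_tsum_le_tsum_enorm
    _ = ∑' i, ∫⁻ a, ‖F i a‖ₑ ∂μ := lintegral_tsum fun i ↦ (hF_int i).1.enorm
    _ < ⊤ := h_lintegral.lt_top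

end MeasureTheory

section GammaMoments

variable {s : ℝ}

theorem integrableOn_mul_exp_neg_mul_rpow (hs : -1 < s) (c : ℂ) :
    IntegrableOn (fun ξ : ℝ ↦ c * ((exp (-ξ) * ξ ^ s : ℝ) : ℂ)) (Ioi 0) := by
  have := GammaIntegral_convergent (s := s + 1) (by linarith)
  rw [add_sub_cancel_right] at this
  exact this.ofReal.const_mul c

theorem integral_mul_exp_neg_mul_rpow (hs : -1 < s) (c : ℂ) :
    ∫ ξ in Ioi 0, c * ((exp (-ξ) * ξ ^ s : ℝ) : ℂ) = c * Gamma (s + 1) := by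
  rw [integral_const_mul, integral_complex_ofReal, Gamma_eq_integral (by linarith),
    add_sub_cancel_right]

theorem integral_norm_mul_exp_neg_mul_rpow (hs : -1 < s) (c : ℂ) :
    ∫ ξ in Ioi 0, ‖c * ((exp (-ξ) * ξ ^ s : ℝ) : ℂ)‖ = ‖c‖ * Gamma (s + 1) := by
  rw [Gamma_eq_integral (by linarith), add_sub_cancel_right, ← integral_const_mul]
  refine setIntegral_congr_fun measurableSet_Ioi fun ξ hξ ↦ ?_
  rw [norm_mul, Complex.norm_of_nonneg (mul_nonneg (exp_nonneg _) (rpow_nonneg (le_of_lt hξ) s))]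

end GammaMoments

section PowerSeries

variable {a : ℝ} {b : ℕ → ℂ}

theorem tsum_mul_pow_mul_rpow_mul_exp_neg {ξ : ℝ} (hξ : 0 < ξ) (b : ℕ → ℂ) :
    (∑' m, b m * (ξ : ℂ) ^ m) * ((ξ ^ a : ℝ) : ℂ) * ((exp (-ξ) : ℝ) : ℂ) =
      ∑' m : ℕ, b m * ((exp (-ξ) * ξ ^ (a + m) : ℝ) : ℂ) := by
  rw [← tsum_mul_right, ← tsum_mul_right]
  refine tsum_congr fun m ↦ ?_
  rw [rpow_add hξ, rpow_natCast]
  push_cast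
  ring

theorem summable_integral_norm_mul_exp_neg_mul_rpow (ha : -1 < a)
    (hb : Summable fun m : ℕ ↦ ‖b m‖ * Gamma (a + m + 1)) :
    Summable fun m : ℕ ↦ ∫ ξ in Ioi 0, ‖b m * ((exp (-ξ) * ξ ^ (a + m) : ℝ) : ℂ)‖ :=
  hb.congr fun m ↦
    (integral_norm_mul_exp_neg_mul_rpow (by linarith [m.cast_nonneg (α := ℝ)]) _).symm

theorem integrableOn_tsum_mul_pow_mul_rpow_mul_exp_neg (ha : -1 < a)
    (hb : Summable fun m : ℕ ↦ ‖b m‖ * Gamma (a + m + 1)) :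
    IntegrableOn
      (fun ξ : ℝ ↦ (∑' m, b m * (ξ : ℂ) ^ m) * ((ξ ^ a : ℝ) : ℂ) * ((exp (-ξ) : ℝ) : ℂ))
      (Ioi 0) := by
  refine IntegrableOn.congr_fun (integrable_tsum_of_summable_integral_norm
    (fun m ↦ integrableOn_mul_exp_neg_mul_rpow (by linarith [m.cast_nonneg (α := ℝ)]) (b m))
    (summable_integral_norm_mul_exp_neg_mul_rpow ha hb)) (fun ξ hξ ↦ ?_) measurableSet_Ioi
  exact (tsum_mul_pow_mul_rpow_mul_exp_neg hξ b).symm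

theorem hasSum_integral_tsum_mul_pow_mul_rpow_mul_exp_neg (ha : -1 < a)
    (hb : Summable fun m : ℕ ↦ ‖b m‖ * Gamma (a + m + 1)) :
    HasSum (fun m : ℕ ↦ b m * Gamma (a + m + 1))
      (∫ ξ in Ioi (0 : ℝ),
        (∑' m, b m * (ξ : ℂ) ^ m) * ((ξ ^ a : ℝ) : ℂ) * ((exp (-ξ) : ℝ) : ℂ)) := by
  have ha_m (m : ℕ) : -1 < a + m := by linarith [m.cast_nonneg (α := ℝ)]
  have h_termwise := hasSum_integral_of_summable_integral_norm
    (fun m ↦ integrableOn_mul_exp_neg_mul_rpow (ha_m m) (b m))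
    (summable_integral_norm_mul_exp_neg_mul_rpow ha hb)
  simp only [integral_mul_exp_neg_mul_rpow (ha_m _)] at h_termwise
  rwa [setIntegral_congr_fun measurableSet_Ioi fun ξ hξ ↦ tsum_mul_pow_mul_rpow_mul_exp_neg hξ b]

end PowerSeries

theorem besselj_two_mul_mul_sqrt_s8 (μ t : ℝ) {ξ : ℝ} (hξ : 0 ≤ ξ) :
    besselj μ ((2 * t * √ξ : ℝ) : ℂ) =
      ∑' m : ℕ, ((Gamma (μ + 1) * (-t ^ 2) ^ m / (m.factorial * Gamma (μ + m + 1)) : ℝ) : ℂ) *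
        (ξ : ℂ) ^ m := by
  refine tsum_congr fun m ↦ ?_
  have h_arg : ((2 * t * √ξ : ℝ) : ℂ) / 2 = ((t * √ξ : ℝ) : ℂ) := by push_cast; ring
  rw [h_arg, pow_mul, ← Complex.ofReal_pow, mul_pow, sq_sqrt hξ]
  push_cast
  ring

/-- For `a > −1` and `t ∈ ℝ`, the function `ξ ↦ j_a(2t√ξ) ξ^a e^{−ξ}` is integrable
on `(0,∞)` and `∫₀^∞ j_a(2t√ξ) ξ^a e^{−ξ} dξ = Γ(a+1) e^{−t²}`: the Gaussian is the
integral of the normalized Bessel functions against the Gamma distribution. -/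
theorem bessel_gamma_integral (a : ℝ) (ha : -1 < a) (t : ℝ) :
    IntegrableOn (fun ξ : ℝ =>
        besselj a ((2 * t * Real.sqrt ξ : ℝ) : ℂ) * ((ξ ^ a : ℝ) : ℂ) *
          ((Real.exp (-ξ) : ℝ) : ℂ)) (Set.Ioi 0) ∧
      ∫ ξ in Set.Ioi (0 : ℝ),
          besselj a ((2 * t * Real.sqrt ξ : ℝ) : ℂ) * ((ξ ^ a : ℝ) : ℂ) *
            ((Real.exp (-ξ) : ℝ) : ℂ) =
        ((Real.Gamma (a + 1) * Real.exp (-t ^ 2) : ℝ) : ℂ) := by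
  set b : ℕ → ℂ := fun m ↦
    ((Gamma (a + 1) * (-t ^ 2) ^ m / (m.factorial * Gamma (a + m + 1)) : ℝ) : ℂ)
  have hGamma_pos (m : ℕ) : 0 < Gamma (a + m + 1) :=
    Gamma_pos_of_pos (by linarith [m.cast_nonneg (α := ℝ)])
  have hb_Gamma (m : ℕ) :
      b m * Gamma (a + m + 1) = ((Gamma (a + 1) * ((-t ^ 2) ^ m / m.factorial) : ℝ) : ℂ) := by
    have := (hGamma_pos m).ne'
    simp only [b, ← Complex.ofReal_mul]
    congr 1
    field_simp
  have h_exp : HasSum (fun m : ℕ ↦ Gamma (a + 1) * ((-t ^ 2) ^ m / m.factorial))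
      (Gamma (a + 1) * exp (-t ^ 2)) := by
    rw [exp_eq_exp_ℝ]
    exact (NormedSpace.expSeries_div_hasSum_exp (-t ^ 2 : ℝ)).mul_left (Gamma (a + 1))
  have hb : Summable fun m : ℕ ↦ ‖b m‖ * Gamma (a + m + 1) := by
    refine h_exp.summable.abs.congr fun m ↦ ?_
    rw [← Real.norm_eq_abs, ← Complex.norm_real, ← hb_Gamma, norm_mul,
      Complex.norm_of_nonneg (hGamma_pos m).le]
  have h_series : EqOn
      (fun ξ : ℝ ↦ besselj a ((2 * t * √ξ : ℝ) : ℂ) * ((ξ ^ a : ℝ) : ℂ) * ((exp (-ξ) : ℝ) : ℂ))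
      (fun ξ ↦ (∑' m, b m * (ξ : ℂ) ^ m) * ((ξ ^ a : ℝ) : ℂ) * ((exp (-ξ) : ℝ) : ℂ)) (Ioi 0) :=
    fun ξ hξ ↦ by dsimp only; rw [besselj_two_mul_mul_sqrt_s8 a t (le_of_lt hξ)]
  refine ⟨(integrableOn_tsum_mul_pow_mul_rpow_mul_exp_neg ha hb).congr_fun h_series.symm
    measurableSet_Ioi, ?_⟩
  rw [setIntegral_congr_fun measurableSet_Ioi h_series]
  refine (hasSum_integral_tsum_mul_pow_mul_rpow_mul_exp_neg ha hb).unique ?_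
  simp only [hb_Gamma]
  exact_mod_cast h_exp
end
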